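/- The LEE Bellman operator is a γ-contraction in sup-norm on bounded functions: with T̂V(x) := c(x) + (1/α)·ln(E_{x'∼P(·|x)}[exp(αγV(x'))]) for a nonnegative bounded stage-cost c and transition kernel P, one has ‖T̂V₁ − T̂V₂‖_∞ ≤ γ·‖V₁ − V₂‖_∞ for all bounded measurable V₁, V₂ and γ ∈ (0,1). -/

import Mathlib

/-!
`T̂V(x) - c(x)` is `α⁻¹` times the cumulant generating function of `V` under `P(·|x)`, evaluated
at `αγ`. For `t ≥ 0` the cumulant generating function is monotone in the random variable and
shifting the variable by a constant `M` shifts it by `t * M`; hence it is `t`-Lipschitz in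
sup-norm, and the factor `α⁻¹ · αγ = γ` is the contraction modulus.
-/

open MeasureTheory ProbabilityTheory

namespace ProbabilityTheory

variable {Ω : Type*} [MeasurableSpace Ω] {μ : Measure Ω} {X Y : Ω → ℝ} {t M : ℝ}

lemma cgf_le_cgf_add_mul_of_le_add [NeZero μ] (hXY : ∀ᵐ ω ∂μ, X ω ≤ Y ω + M) (ht : 0 ≤ t)
    (hX : Integrable (fun ω ↦ Real.exp (t * X ω)) μ)
    (hY : Integrable (fun ω ↦ Real.exp (t * Y ω)) μ) :
    cgf X μ t ≤ cgf Y μ t + t * M := by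
  have hYM : Integrable (fun ω ↦ Real.exp (t * (Y ω + M))) μ := by
    simpa only [mul_add, Real.exp_add] using hY.mul_const (Real.exp (t * M))
  have hmgf : mgf X μ t ≤ mgf Y μ t * Real.exp (t * M) := by
    rw [← mgf_add_const]
    exact mgf_mono_of_nonneg hXY ht hYM
  calc cgf X μ t ≤ Real.log (mgf Y μ t * Real.exp (t * M)) :=
        Real.log_le_log (mgf_pos' (NeZero.ne μ) hX) hmgf
    _ = cgf Y μ t + t * M := by
        rw [Real.log_mul (mgf_pos' (NeZero.ne μ) hY).ne' (Real.exp_pos _).ne', Real.log_exp, cgf]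

lemma abs_cgf_sub_cgf_le [NeZero μ] (hXY : ∀ᵐ ω ∂μ, |X ω - Y ω| ≤ M) (ht : 0 ≤ t)
    (hX : Integrable (fun ω ↦ Real.exp (t * X ω)) μ)
    (hY : Integrable (fun ω ↦ Real.exp (t * Y ω)) μ) :
    |cgf X μ t - cgf Y μ t| ≤ t * M := by
  have hXY' : ∀ᵐ ω ∂μ, X ω ≤ Y ω + M := by
    filter_upwards [hXY] with ω h using by linarith [(abs_le.mp h).2]
  have hYX' : ∀ᵐ ω ∂μ, Y ω ≤ X ω + M := by
    filter_upwards [hXY] with ω h using by linarith [(abs_le.mp h).1]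
  rw [abs_sub_le_iff]
  constructor <;> linarith [cgf_le_cgf_add_mul_of_le_add hXY' ht hX hY,
    cgf_le_cgf_add_mul_of_le_add hYX' ht hY hX]

end ProbabilityTheory

theorem LEE_bellman_operator_contraction_general
    {X : Type*} [MeasurableSpace X] [Nonempty X]
    (P : X → Measure X) (hP : ∀ x, IsProbabilityMeasure (P x))
    (c : X → ℝ)
    (α γ : ℝ) (hα : 0 < α) (hγ : 0 < γ)
    (T : (X → ℝ) → (X → ℝ))
    (hT : ∀ V x, T V x =
      c x + (1 / α) * Real.log (∫ y, Real.exp (α * γ * V y) ∂(P x)))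
    (V₁ V₂ : X → ℝ) (hm₁ : Measurable V₁) (hm₂ : Measurable V₂)
    (hb₁ : ∃ C, ∀ x, |V₁ x| ≤ C) (hb₂ : ∃ C, ∀ x, |V₂ x| ≤ C) :
    (⨆ x, |T V₁ x - T V₂ x|) ≤ γ * ⨆ x, |V₁ x - V₂ x| := by
  obtain ⟨C₁, hC₁⟩ := hb₁
  obtain ⟨C₂, hC₂⟩ := hb₂
  have hM : ∀ y, |V₁ y - V₂ y| ≤ ⨆ x, |V₁ x - V₂ x| := le_ciSup
    ⟨C₁ + C₂, by rintro _ ⟨y, rfl⟩; linarith [abs_sub (V₁ y) (V₂ y), hC₁ y, hC₂ y]⟩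
  have hint : ∀ V : X → ℝ, Measurable V → ∀ C, (∀ y, |V y| ≤ C) →
      ∀ x, Integrable (fun y ↦ Real.exp (α * γ * V y)) (P x) := fun V hV C hC x ↦
    have := hP x
    integrable_exp_mul_of_mem_Icc hV.aemeasurable (ae_of_all _ fun y ↦ abs_le.mp (hC y))
  have hTcgf : ∀ V x, T V x = c x + α⁻¹ * cgf V (P x) (α * γ) := by
    simpa only [one_div, cgf, mgf] using hT
  refine ciSup_le fun x ↦ ?_
  have := hP x
  calc |T V₁ x - T V₂ x| = α⁻¹ * |cgf V₁ (P x) (α * γ) - cgf V₂ (P x) (α * γ)| := by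
        rw [hTcgf, hTcgf, add_sub_add_left_eq_sub, ← mul_sub, abs_mul, abs_of_pos (inv_pos.2 hα)]
    _ ≤ α⁻¹ * (α * γ * ⨆ y, |V₁ y - V₂ y|) := by
        gcongr
        exact abs_cgf_sub_cgf_le (ae_of_all _ hM) (by positivity)
          (hint V₁ hm₁ C₁ hC₁ x) (hint V₂ hm₂ C₂ hC₂ x)
    _ = γ * ⨆ y, |V₁ y - V₂ y| := by field_simp

/-- The LEE Bellman operator `T̂V(x) := c(x) + (1/α)·ln(E_{x'∼P(·|x)}[exp(αγV(x'))])`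
is a `γ`-contraction in sup-norm on bounded measurable functions. -/
theorem LEE_bellman_operator_contraction
    {X : Type*} [MeasurableSpace X] [Nonempty X]
    (P : X → Measure X) (hP : ∀ x, IsProbabilityMeasure (P x))
    (c : X → ℝ) (hc : ∀ x, 0 ≤ c x) (hcb : ∃ C, ∀ x, c x ≤ C) (hcm : Measurable c)
    (α γ : ℝ) (hα : 0 < α) (hγ : 0 < γ) (hγ1 : γ < 1)
    (T : (X → ℝ) → (X → ℝ))
    (hT : ∀ V x, T V x =
      c x + (1 / α) * Real.log (∫ y, Real.exp (α * γ * V y) ∂(P x)))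
    (V₁ V₂ : X → ℝ) (hm₁ : Measurable V₁) (hm₂ : Measurable V₂)
    (hb₁ : ∃ C, ∀ x, |V₁ x| ≤ C) (hb₂ : ∃ C, ∀ x, |V₂ x| ≤ C) :
    (⨆ x, |T V₁ x - T V₂ x|) ≤ γ * ⨆ x, |V₁ x - V₂ x| :=
  LEE_bellman_operator_contraction_general P hP c α γ hα hγ T hT V₁ V₂ hm₁ hm₂ hb₁ hb₂
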